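/- arXiv:1101.3218 — 4 statements merged into one kernel-verified Lean document; each statement's English description precedes it below -/
import Mathlib

section
/- For every ε > 0 and every continuous compactly supported function u : ℝ → ℝ, the two-scale transform T_ε preserves the L² norm: ∫_ℝ ∫_{−1/2}^{1/2} ((T_ε u)(x, y))² dy dx = ∫_ℝ (u(x))² dx. (In particular T_ε is a continuous linear operator from L²(ℝ) into L²(ℝ × Y).) -/
/-!
On the cell `I_k = [ε(k - 1/2), ε(k + 1/2))` where `k_ε = k`, the substitution `t = c_ε(x) + εy`
turns the inner integral into the mean `ε⁻¹ ∫_{I_k} u²`, which does not depend on `x ∈ I_k`.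
Integrating it over `I_k`, of length `ε`, gives back `∫_{I_k} u²`, and summing over `k ∈ ℤ` gives
`∫ u²`. This is the general fact that averaging an integrable function over the cells of a countable
partition into sets of finite measure (its conditional expectation on the partition) preserves the
integral.
-/

open MeasureTheory intervalIntegral Set Filter

/-- `kEps ε x = ⌊x/ε + 1/2⌋`. -/
noncomputable def kEps (ε x : ℝ) : ℤ := ⌊x / ε + 1 / 2⌋

/-- `cEps ε x = ε · kEps ε x`. -/
noncomputable def cEps (ε x : ℝ) : ℝ := ε * (kEps ε x : ℝ)

/-- The two-scale transform `(T_ε u)(x, y) = u(c_ε(x) + ε·y)`. -/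
noncomputable def twoScale (ε : ℝ) (u : ℝ → ℝ) (x y : ℝ) : ℝ := u (cEps ε x + ε * y)

section FiberAverage

variable {α ι E : Type*} [MeasurableSpace α] [NormedAddCommGroup E] [NormedSpace ℝ E]
  {μ : Measure α} {f : α → ι} {F : α → E}

/-- On a fiber of infinite measure `μ.real` is `0`, so the average there is the junk value `0`. -/
noncomputable def fiberAverage (μ : Measure α) (f : α → ι) (F : α → E) (x : α) : E :=
  (μ.real (f ⁻¹' {f x}))⁻¹ • ∫ t in f ⁻¹' {f x}, F t ∂μ

theorem eqOn_fiberAverage (i : ι) :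
    EqOn (fiberAverage μ f F) (fun _ ↦ (μ.real (f ⁻¹' {i}))⁻¹ • ∫ t in f ⁻¹' {i}, F t ∂μ)
      (f ⁻¹' {i}) := by
  intro x hx
  rw [mem_preimage, mem_singleton_iff] at hx
  simp only [fiberAverage, hx]

theorem hasSum_setIntegral_fiber [Countable ι] (hf : ∀ i, MeasurableSet (f ⁻¹' {i}))
    (hF : Integrable F μ) :
    HasSum (fun i ↦ ∫ x in f ⁻¹' {i}, F x ∂μ) (∫ x, F x ∂μ) := by
  have hcover : (⋃ i, f ⁻¹' {i}) = univ := iUnion_eq_univ_iff.2 fun x ↦ ⟨f x, rfl⟩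
  have h := hasSum_integral_iUnion hf (pairwise_disjoint_fiber f) hF.integrableOn
  rwa [hcover, setIntegral_univ] at h

variable [CompleteSpace E] {i : ι}

theorem setIntegral_fiberAverage (hi : MeasurableSet (f ⁻¹' {i})) (hfin : μ (f ⁻¹' {i}) ≠ ⊤) :
    ∫ x in f ⁻¹' {i}, fiberAverage μ f F x ∂μ = ∫ x in f ⁻¹' {i}, F x ∂μ := by
  rw [setIntegral_congr_fun hi (eqOn_fiberAverage i), setIntegral_const]
  rcases eq_or_ne (μ.real (f ⁻¹' {i})) 0 with h0 | h0
  · rw [measureReal_eq_zero_iff hfin] at h0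
    simp [setIntegral_measure_zero _ h0]
  · exact smul_inv_smul₀ h0 _

theorem setIntegral_norm_fiberAverage_le (hi : MeasurableSet (f ⁻¹' {i}))
    (hfin : μ (f ⁻¹' {i}) ≠ ⊤) :
    ∫ x in f ⁻¹' {i}, ‖fiberAverage μ f F x‖ ∂μ ≤ ∫ x in f ⁻¹' {i}, ‖F x‖ ∂μ :=
  calc ∫ x in f ⁻¹' {i}, ‖fiberAverage μ f F x‖ ∂μ
      = ‖∫ x in f ⁻¹' {i}, fiberAverage μ f F x ∂μ‖ := by
        rw [setIntegral_congr_fun hi fun x hx ↦ congrArg norm (eqOn_fiberAverage i hx),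
          setIntegral_congr_fun hi (eqOn_fiberAverage i), setIntegral_const, setIntegral_const,
          norm_smul (μ.real _), smul_eq_mul, Real.norm_of_nonneg measureReal_nonneg]
    _ = ‖∫ x in f ⁻¹' {i}, F x ∂μ‖ := by rw [setIntegral_fiberAverage hi hfin]
    _ ≤ ∫ x in f ⁻¹' {i}, ‖F x‖ ∂μ := norm_integral_le_integral_norm _

variable [Countable ι] (hf : ∀ i, MeasurableSet (f ⁻¹' {i})) (hfin : ∀ i, μ (f ⁻¹' {i}) ≠ ⊤)
include hf hfin

theorem integrable_fiberAverage (hF : Integrable F μ) : Integrable (fiberAverage μ f F) μ := by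
  have hcover : (⋃ i, f ⁻¹' {i}) = univ := iUnion_eq_univ_iff.2 fun x ↦ ⟨f x, rfl⟩
  rw [← integrableOn_univ, ← hcover]
  refine integrableOn_iUnion_of_summable_integral_norm
    (fun i ↦ (integrableOn_const (hfin i)).congr_fun (eqOn_fiberAverage i).symm (hf i)) ?_
  exact (hasSum_setIntegral_fiber hf hF.norm).summable.of_nonneg_of_le
    (fun i ↦ setIntegral_nonneg (hf i) fun _ _ ↦ norm_nonneg _)
    fun i ↦ setIntegral_norm_fiberAverage_le (hf i) (hfin i)

theorem integral_fiberAverage (hF : Integrable F μ) :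
    ∫ x, fiberAverage μ f F x ∂μ = ∫ x, F x ∂μ := by
  refine (hasSum_setIntegral_fiber hf (integrable_fiberAverage hf hfin hF)).unique ?_
  simpa only [setIntegral_fiberAverage (hf _) (hfin _)] using hasSum_setIntegral_fiber hf hF

end FiberAverage

section TwoScale

variable {ε : ℝ}

theorem kEps_eq_iff (hε : 0 < ε) {x : ℝ} {k : ℤ} :
    kEps ε x = k ↔ x ∈ Ico (ε * k - ε / 2) (ε * k + ε / 2) := by
  rw [kEps, Int.floor_eq_iff, mem_Ico, ← sub_le_iff_le_add, ← lt_sub_iff_add_lt,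
    le_div_iff₀ hε, div_lt_iff₀ hε]
  constructor <;> rintro ⟨h₁, h₂⟩ <;> constructor <;> linarith

theorem kEps_preimage_singleton (hε : 0 < ε) (k : ℤ) :
    kEps ε ⁻¹' {k} = Ico (ε * k - ε / 2) (ε * k + ε / 2) :=
  ext fun _ ↦ kEps_eq_iff hε

theorem volume_kEps_preimage_singleton (hε : 0 < ε) (k : ℤ) :
    volume (kEps ε ⁻¹' {k}) = ENNReal.ofReal ε := by
  rw [kEps_preimage_singleton hε, Real.volume_Ico]
  ring_nf

variable {E : Type*} [NormedAddCommGroup E] [NormedSpace ℝ E]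

theorem intervalIntegral_comp_cEps_add_mul (hε : 0 < ε) (F : ℝ → E) (x : ℝ) :
    ∫ y in (-(1:ℝ)/2)..(1/2), F (cEps ε x + ε * y) = fiberAverage volume (kEps ε) F x := by
  rw [intervalIntegral.integral_comp_add_mul F hε.ne', fiberAverage, measureReal_def,
    volume_kEps_preimage_singleton hε, ENNReal.toReal_ofReal hε.le, kEps_preimage_singleton hε,
    integral_Ico_eq_integral_Ioc, ← intervalIntegral.integral_of_le (by linarith), cEps]
  ring_nf

theorem integral_intervalIntegral_comp_cEps_add_mul [CompleteSpace E] (hε : 0 < ε) {F : ℝ → E}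
    (hF : Integrable F) :
    ∫ x, ∫ y in (-(1:ℝ)/2)..(1/2), F (cEps ε x + ε * y) = ∫ x, F x := by
  simp only [intervalIntegral_comp_cEps_add_mul hε]
  refine integral_fiberAverage (fun k ↦ ?_) (fun k ↦ ?_) hF
  · rw [kEps_preimage_singleton hε]; exact measurableSet_Ico
  · rw [volume_kEps_preimage_singleton hε]; exact ENNReal.ofReal_ne_top

end TwoScale

/-- The two-scale transform preserves the L² norm on continuous compactly
supported functions. -/
theorem twoScale_isometry (ε : ℝ) (hε : 0 < ε) (u : ℝ → ℝ)
    (hu : Continuous u) (hsupp : HasCompactSupport u) :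
    ∫ x : ℝ, ∫ y in (-(1:ℝ)/2)..(1/2), (twoScale ε u x y) ^ 2 =
      ∫ x : ℝ, (u x) ^ 2 := by
  have hu2 : Integrable fun x ↦ u x ^ 2 := (hu.memLp_of_hasCompactSupport hsupp).integrable_sq
  exact integral_intervalIntegral_comp_cEps_add_mul hε hu2
end

section
/- Duality identity defining the adjoint two-scale transform: let ε > 0, let u : ℝ → ℝ be continuous with compact support, and let w : ℝ × ℝ → ℝ be continuous, Y-periodic in its second variable, and such that there is R > 0 with w(x, y) = 0 whenever |x| ≥ R. Then ∫_ℝ ∫_{−1/2}^{1/2} (T_ε u)(x, y)·w(x, y) dy dx = ∫_ℝ u(x)·(T_ε* w)(x) dx. -/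
open MeasureTheory intervalIntegral Set

/-- `yEps ε x = x/ε − kEps ε x`. -/
noncomputable def yEps (ε x : ℝ) : ℝ := x / ε - (kEps ε x : ℝ)

/-- The adjoint two-scale transform `(T_ε* w)(x) = ∫_{−1/2}^{1/2} w(c_ε(x) + ε·z, y_ε(x)) dz`. -/
noncomputable def twoScaleAdj (ε : ℝ) (w : ℝ → ℝ → ℝ) (x : ℝ) : ℝ :=
  ∫ z in (-(1:ℝ)/2)..(1/2), w (cEps ε x + ε * z) (yEps ε x)

/-!
Cut `ℝ` into the cells `ε (k + Y)`, `k ∈ ℤ`. On the cell of `k` we have `c_ε ≡ ε k` and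
`y_ε (ε k + ε z) = z`, so after rescaling each cell to `Y` both sides become
`ε ∑ₖ ∫_Y ∫_Y u(ε k + ε y) w(ε k + ε z, y)`, integrated in the two opposite orders;
Fubini on `Y × Y` identifies them.
-/

lemma measurable_kEps (ε : ℝ) : Measurable (kEps ε) :=
  ((measurable_id.div_const ε).add_const _).floor

lemma measurable_cEps (ε : ℝ) : Measurable (cEps ε) :=
  measurable_const.mul (measurable_from_top.comp (measurable_kEps ε))

lemma measurable_yEps (ε : ℝ) : Measurable (yEps ε) :=
  (measurable_id.div_const ε).sub (measurable_from_top.comp (measurable_kEps ε))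

lemma yEps_mem_Icc (ε x : ℝ) : yEps ε x ∈ Icc (-(1:ℝ)/2) (1/2) := by
  have h₁ := Int.floor_le (x / ε + 1 / 2)
  have h₂ := Int.lt_floor_add_one (x / ε + 1 / 2)
  rw [yEps, kEps]
  constructor <;> linarith

section Cells

variable {ε : ℝ}

lemma kEps_mul_add (hε : ε ≠ 0) (k : ℤ) {z : ℝ} (hz : z ∈ Ico (-(1:ℝ)/2) (1/2)) :
    kEps ε (ε * k + ε * z) = k := by
  have hdiv : (ε * k + ε * z) / ε = k + z := by field_simp
  rw [kEps, Int.floor_eq_iff, hdiv]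
  constructor <;> linarith [hz.1, hz.2]

lemma cEps_mul_add (hε : ε ≠ 0) (k : ℤ) {z : ℝ} (hz : z ∈ Ico (-(1:ℝ)/2) (1/2)) :
    cEps ε (ε * k + ε * z) = ε * k := by
  rw [cEps, kEps_mul_add hε k hz]

lemma yEps_mul_add (hε : ε ≠ 0) (k : ℤ) {z : ℝ} (hz : z ∈ Ico (-(1:ℝ)/2) (1/2)) :
    yEps ε (ε * k + ε * z) = z := by
  rw [yEps, kEps_mul_add hε k hz]
  field_simp
  ring

theorem integral_eq_smul_tsum_integral_cell {E : Type*} [NormedAddCommGroup E] [NormedSpace ℝ E]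
    {f : ℝ → E} (hf : Integrable f) (hε : 0 < ε) :
    ∫ x, f x = ε • ∑' k : ℤ, ∫ z in (-(1:ℝ)/2)..(1/2), f (ε * k + ε * z) := by
  have hg : Integrable fun t => f (ε * t) := hf.comp_mul_left' hε.ne'
  calc ∫ x, f x = ε • ∫ t, f (ε * t) := by
        rw [Measure.integral_comp_mul_left, abs_inv, abs_of_pos hε, smul_smul,
          mul_inv_cancel₀ hε.ne', one_smul]
    _ = ε • ∑' k : ℤ, ∫ t in -(1:ℝ)/2 + k..-(1:ℝ)/2 + k + 1, f (ε * t) := by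
        rw [(hg.hasSum_intervalIntegral _).tsum_eq]
    _ = ε • ∑' k : ℤ, ∫ z in (-(1:ℝ)/2)..(1/2), f (ε * k + ε * z) := by
        congr 1
        refine tsum_congr fun k => ?_
        rw [show -(1:ℝ)/2 + k + 1 = 1/2 + k by ring,
          ← integral_comp_add_right (fun t => f (ε * t))]
        simp only [mul_add, add_comm]

end Cells

theorem StronglyMeasurable.intervalIntegral_prod_right {E : Type*} [NormedAddCommGroup E]
    [NormedSpace ℝ E] {f : ℝ → ℝ → E} (hf : StronglyMeasurable (Function.uncurry f))
    (a b : ℝ) :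
    StronglyMeasurable fun x => ∫ y in a..b, f x y :=
  (hf.integral_prod_right (ν := volume.restrict (Ioc a b))).sub
    (hf.integral_prod_right (ν := volume.restrict (Ioc b a)))

lemma exists_bound_of_continuous_of_vanishing {E : Type*} [NormedAddCommGroup E]
    {w : ℝ → ℝ → E} (hw : Continuous (Function.uncurry w)) {R : ℝ}
    (hwsupp : ∀ x y, R ≤ |x| → w x y = 0) {K : Set ℝ} (hK : IsCompact K) :
    ∃ C, ∀ x, ∀ y ∈ K, ‖w x y‖ ≤ C := by
  obtain ⟨C, hC⟩ := (isCompact_Icc.prod hK).exists_bound_of_continuousOn hw.continuousOn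
  refine ⟨max C 0, fun x y hy => ?_⟩
  rcases le_or_gt R |x| with hx | hx
  · simp [hwsupp x y hx]
  · exact le_max_of_le_left (hC (x, y) ⟨abs_le.1 hx.le, hy⟩)

section Integrability

variable {ε : ℝ} {u : ℝ → ℝ} {w : ℝ → ℝ → ℝ} {R : ℝ}

lemma integrable_integral_twoScale_mul (hu : Continuous u) (husupp : HasCompactSupport u)
    (hw : Continuous (Function.uncurry w)) (hwsupp : ∀ x y, R ≤ |x| → w x y = 0) :
    Integrable fun x => ∫ y in (-(1:ℝ)/2)..(1/2), twoScale ε u x y * w x y := by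
  obtain ⟨Cu, hCu⟩ := husupp.exists_bound_of_continuous hu
  obtain ⟨Cw, hCw⟩ := exists_bound_of_continuous_of_vanishing hw hwsupp
    (isCompact_uIcc (a := -(1:ℝ)/2) (b := 1/2))
  have hmeas :
      StronglyMeasurable fun x => ∫ y in (-(1:ℝ)/2)..(1/2), twoScale ε u x y * w x y :=
    StronglyMeasurable.intervalIntegral_prod_right (f := fun x y => twoScale ε u x y * w x y)
      ((hu.measurable.comp (((measurable_cEps ε).comp measurable_fst).add
        (measurable_snd.const_mul ε))).mul hw.measurable).stronglyMeasurable _ _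
  have hsupp :
      Function.support (fun x => ∫ y in (-(1:ℝ)/2)..(1/2), twoScale ε u x y * w x y) ⊆
        Icc (-R) R := by
    refine fun x hx => abs_le.1 (not_lt.1 fun hRx => hx ?_)
    simp [hwsupp x _ hRx.le]
  refine (integrableOn_iff_integrable_of_support_subset hsupp).1
    (Measure.integrableOn_of_bounded measure_Icc_lt_top.ne hmeas.aestronglyMeasurable
      (ae_of_all _ fun x => norm_integral_le_of_norm_le_const (C := Cu * Cw) fun y hy => ?_))
  rw [twoScale, norm_mul]
  exact mul_le_mul (hCu _) (hCw _ _ (uIoc_subset_uIcc hy)) (norm_nonneg _)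
    ((norm_nonneg _).trans (hCu 0))

lemma integrable_mul_twoScaleAdj (hu : Continuous u) (husupp : HasCompactSupport u)
    (hw : Continuous (Function.uncurry w)) (hwsupp : ∀ x y, R ≤ |x| → w x y = 0) :
    Integrable fun x => u x * twoScaleAdj ε w x := by
  obtain ⟨Cw, hCw⟩ := exists_bound_of_continuous_of_vanishing hw hwsupp
    (isCompact_Icc (a := -(1:ℝ)/2) (b := 1/2))
  have hmeas : StronglyMeasurable (twoScaleAdj ε w) :=
    StronglyMeasurable.intervalIntegral_prod_right
      (f := fun x z => w (cEps ε x + ε * z) (yEps ε x))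
      (hw.measurable.comp ((((measurable_cEps ε).comp measurable_fst).add
        (measurable_snd.const_mul ε)).prodMk
          ((measurable_yEps ε).comp measurable_fst))).stronglyMeasurable _ _
  exact (hu.integrable_of_hasCompactSupport husupp).mul_bdd hmeas.aestronglyMeasurable
    (ae_of_all _ fun x => norm_integral_le_of_norm_le_const fun z _ => hCw _ _ (yEps_mem_Icc ε x))

end Integrability

theorem integral_cell_twoScale_mul_eq {ε : ℝ} (hε : 0 < ε) {u : ℝ → ℝ}
    (hu : Continuous u) {w : ℝ → ℝ → ℝ} (hw : Continuous (Function.uncurry w)) (k : ℤ) :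
    ∫ z in (-(1:ℝ)/2)..(1/2), ∫ y in (-(1:ℝ)/2)..(1/2),
        twoScale ε u (ε * k + ε * z) y * w (ε * k + ε * z) y =
      ∫ z in (-(1:ℝ)/2)..(1/2), u (ε * k + ε * z) * twoScaleAdj ε w (ε * k + ε * z) := by
  have hY : (-(1:ℝ)/2) ≤ 1/2 := by norm_num
  calc _ = ∫ z in (-(1:ℝ)/2)..(1/2), ∫ y in (-(1:ℝ)/2)..(1/2),
          u (ε * k + ε * y) * w (ε * k + ε * z) y :=
        integral_congr_Ioo_of_le hY fun z hz => by
          simp only [twoScale, cEps_mul_add hε.ne' k (Ioo_subset_Ico_self hz)]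
    _ = ∫ y in (-(1:ℝ)/2)..(1/2), ∫ z in (-(1:ℝ)/2)..(1/2),
          u (ε * k + ε * y) * w (ε * k + ε * z) y := by
        refine intervalIntegral_intervalIntegral_swap ?_
        have hcont : Continuous
            (Function.uncurry fun z y => u (ε * k + ε * y) * w (ε * k + ε * z) y) :=
          (hu.comp (by fun_prop)).mul
            (hw.comp (f := fun p : ℝ × ℝ => (ε * k + ε * p.1, p.2)) (by fun_prop))
        exact (hcont.continuousOn.integrableOn_compact (μ := volume)
          (isCompact_uIcc.prod isCompact_uIcc)).mono_set
          (prod_mono uIoc_subset_uIcc uIoc_subset_uIcc)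
    _ = ∫ y in (-(1:ℝ)/2)..(1/2), u (ε * k + ε * y) * ∫ z in (-(1:ℝ)/2)..(1/2),
          w (ε * k + ε * z) y := by
        simp only [intervalIntegral.integral_const_mul]
    _ = _ := integral_congr_Ioo_of_le hY fun z hz => by
          rw [twoScaleAdj, cEps_mul_add hε.ne' k (Ioo_subset_Ico_self hz),
            yEps_mul_add hε.ne' k (Ioo_subset_Ico_self hz)]

theorem twoScale_duality_general (ε : ℝ) (hε : 0 < ε) (u : ℝ → ℝ)
    (hu : Continuous u) (husupp : HasCompactSupport u)
    (w : ℝ → ℝ → ℝ) (hw : Continuous fun p : ℝ × ℝ => w p.1 p.2)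
    (R : ℝ) (hwsupp : ∀ x y : ℝ, R ≤ |x| → w x y = 0) :
    ∫ x : ℝ, ∫ y in (-(1:ℝ)/2)..(1/2), twoScale ε u x y * w x y =
      ∫ x : ℝ, u x * twoScaleAdj ε w x := by
  rw [integral_eq_smul_tsum_integral_cell
      (integrable_integral_twoScale_mul hu husupp hw hwsupp) hε,
    integral_eq_smul_tsum_integral_cell (integrable_mul_twoScaleAdj hu husupp hw hwsupp) hε]
  simp only [integral_cell_twoScale_mul_eq hε hu hw]

/-- Duality identity defining the adjoint two-scale transform. -/
theorem twoScale_duality (ε : ℝ) (hε : 0 < ε) (u : ℝ → ℝ)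
    (hu : Continuous u) (husupp : HasCompactSupport u)
    (w : ℝ → ℝ → ℝ) (hw : Continuous fun p : ℝ × ℝ => w p.1 p.2)
    (hper : ∀ x y : ℝ, w x (y + 1) = w x y)
    (R : ℝ) (hR : 0 < R) (hwsupp : ∀ x y : ℝ, R ≤ |x| → w x y = 0) :
    ∫ x : ℝ, ∫ y in (-(1:ℝ)/2)..(1/2), twoScale ε u x y * w x y =
      ∫ x : ℝ, u x * twoScaleAdj ε w x :=
  twoScale_duality_general ε hε u hu husupp w hw R hwsupp
end

section
/- Zero-order approximation of the adjoint transform by the regularization operator (pointwise form of Lemma 'Approx T*'): let v : ℝ × ℝ → ℝ be Y-periodic in its second variable and Lipschitz in its first variable with constant L ≥ 0, uniformly in the second variable (|v(x, y) − v(x', y)| ≤ L·|x − x'| for all x, x', y). Then for every ε > 0 and every x ∈ ℝ, |(T_ε* v)(x) − (B_ε v)(x)| ≤ L·ε. -/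
/-!
On the cell of `x`, `T_ε* v (x)` averages `z ↦ v (c_ε(x) + ε z, y_ε(x))` over `z ∈ [-1/2, 1/2]`,
while periodicity turns `B_ε v (x) = v (x, x/ε)` into the value of the same function at
`z = y_ε(x)`, because `x = c_ε(x) + ε y_ε(x)`. That function is `Lε`-Lipschitz and `y_ε(x)` lies in
the unit interval of integration, so the average differs from the value by at most `Lε`.
-/

open MeasureTheory intervalIntegral Set

noncomputable def regOp (ε : ℝ) (w : ℝ → ℝ → ℝ) (x : ℝ) : ℝ := w x (x / ε)

open scoped NNReal

theorem LipschitzWith.comp_const_add_mul {f : ℝ → ℝ} {K : ℝ≥0} (hf : LipschitzWith K f)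
    (c ε : ℝ) : LipschitzWith (K * ‖ε‖₊) fun z => f (c + ε * z) :=
  LipschitzWith.of_dist_le_mul fun a b =>
    calc dist (f (c + ε * a)) (f (c + ε * b)) ≤ K * dist (c + ε * a) (c + ε * b) :=
          hf.dist_le_mul _ _
      _ = K * ‖ε‖₊ * dist a b := by
          simp only [Real.dist_eq, add_sub_add_left_eq_sub, ← mul_sub, abs_mul, coe_nnnorm, Real.norm_eq_abs, mul_assoc]

theorem LipschitzWith.abs_intervalIntegral_sub_mul_le {g : ℝ → ℝ} {K : ℝ≥0}
    (hg : LipschitzWith K g) {a b y : ℝ} (hab : a ≤ b) (hy : y ∈ Icc a b) :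
    |(∫ z in a..b, g z) - (b - a) * g y| ≤ K * (b - a) ^ 2 := by
  have hsub : (∫ z in a..b, g z) - (b - a) * g y = ∫ z in a..b, (g z - g y) := by
    rw [integral_sub (hg.continuous.intervalIntegrable a b) intervalIntegrable_const,
      intervalIntegral.integral_const, smul_eq_mul]
  have hbound : ∀ z ∈ uIoc a b, ‖g z - g y‖ ≤ K * (b - a) := by
    intro z hz
    rw [uIoc_of_le hab] at hz
    calc ‖g z - g y‖ = dist (g z) (g y) := (dist_eq_norm _ _).symm
      _ ≤ K * dist z y := hg.dist_le_mul z y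
      _ ≤ K * (b - a) := by
          gcongr
          rw [Real.dist_eq, abs_le]
          constructor <;> linarith [hy.1, hy.2, hz.1, hz.2]
  calc |(∫ z in a..b, g z) - (b - a) * g y|
      ≤ K * (b - a) * |b - a| := hsub ▸ norm_integral_le_of_norm_le_const hbound
    _ = K * (b - a) ^ 2 := by rw [abs_of_nonneg (sub_nonneg.2 hab)]; ring

theorem yEps_mem_Ico (ε x : ℝ) : yEps ε x ∈ Ico (-1 / 2) (1 / 2) := by
  have hle := Int.floor_le (x / ε + 1 / 2)
  have hlt := Int.lt_floor_add_one (x / ε + 1 / 2)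
  constructor <;> simp only [yEps, kEps] <;> linarith

theorem cEps_add_mul_yEps {ε : ℝ} (hε : ε ≠ 0) (x : ℝ) : cEps ε x + ε * yEps ε x = x := by
  rw [cEps, yEps, mul_sub, mul_div_cancel₀ x hε]
  ring

theorem regOp_eq_of_periodic {v : ℝ → ℝ → ℝ} (hper : ∀ x, Function.Periodic (v x) 1)
    (ε x : ℝ) : regOp ε v x = v x (yEps ε x) := by
  rw [regOp, yEps, ← (hper x).sub_int_mul_eq (kEps ε x), mul_one]

/-- Pointwise zero-order approximation of the adjoint transform by the
regularization operator (Lemma "Approx T*"). -/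
theorem twoScaleAdj_approx_regOp (v : ℝ → ℝ → ℝ)
    (hper : ∀ x y : ℝ, v x (y + 1) = v x y)
    (L : ℝ) (hL : 0 ≤ L)
    (hLip : ∀ x x' y : ℝ, |v x y - v x' y| ≤ L * |x - x'|)
    (ε : ℝ) (hε : 0 < ε) (x : ℝ) :
    |twoScaleAdj ε v x - regOp ε v x| ≤ L * ε := by
  have hv : LipschitzWith L.toNNReal fun x' => v x' (yEps ε x) :=
    LipschitzWith.of_dist_le_mul fun a b => by
      simpa only [Real.coe_toNNReal L hL, Real.dist_eq] using hLip a b (yEps ε x)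
  have hy : yEps ε x ∈ Icc (-1 / 2) (1 / 2) := Ico_subset_Icc_self (yEps_mem_Ico ε x)
  have hbound := (hv.comp_const_add_mul (cEps ε x) ε).abs_intervalIntegral_sub_mul_le
    (by norm_num) hy
  rw [cEps_add_mul_yEps hε.ne' x] at hbound
  rw [twoScaleAdj, regOp_eq_of_periodic hper]
  convert hbound using 1 <;> norm_num [hL, abs_of_pos hε]
end

section
/- Weak convergence of regularized periodic functions to their cell average: let v : ℝ × ℝ → ℝ be continuous, Y-periodic in its second variable, and Lipschitz in its first variable uniformly in the second variable, and let g : ℝ → ℝ be continuous with compact support. Then ∫_ℝ g(x)·v(x, x/ε) dx tends to ∫_ℝ g(x)·(∫_{−1/2}^{1/2} v(x, y) dy) dx as ε → 0⁺. -/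
/-!
Every translate `x ↦ x + ε s` leaves `∫ F(x, x/ε) dx` unchanged and turns `F(x, x/ε)` into
`F(x + ε s, x/ε + s)`; averaging over `s ∈ [0, 1]` therefore writes the integral as
`∫ ∫₀¹ F(x + ε s, x/ε + s) ds dx`. By periodicity `∫₀¹ F(x, x/ε + s) ds` is the cell average of
`F(x, ·)`, so the error is bounded by the oscillation of `F` over `x`-distances `ε`, which is
uniform in the second variable because `F` is periodic in it and compactly supported in `x`.
Here `F(x, y) = g(x) v(x, y)`.
-/

open MeasureTheory intervalIntegral Set Filter Topology

open Function

lemma apply_eq_zero_of_notMem_cthickening {α E : Type*} [PseudoMetricSpace α] [Zero E]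
    {f : α → E} {r : ℝ} {x x' : α} (hx : x ∉ Metric.cthickening r (tsupport f))
    (hxx' : dist x x' ≤ r) : f x' = 0 :=
  image_eq_zero_of_notMem_tsupport fun h => hx (Metric.mem_cthickening_of_dist_le x x' r _ h hxx')

lemma dist_self_add_mul_le {x ε s : ℝ} (hε : 0 ≤ ε) (hs : s ∈ Icc (0 : ℝ) 1) :
    dist x (x + ε * s) ≤ ε := by
  rw [dist_comm, dist_eq_norm, add_sub_cancel_left, norm_mul, Real.norm_of_nonneg hε,
    Real.norm_of_nonneg hs.1]
  exact mul_le_of_le_one_right hε hs.2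

lemma uniformEquicontinuous_flip_of_periodic {E : Type*} [PseudoMetricSpace E] [Zero E]
    {F : ℝ → ℝ → E} (hF : Continuous (uncurry F)) (hper : ∀ x, Periodic (F x) 1)
    (hsupp : HasCompactSupport F) :
    UniformEquicontinuous (flip F) := by
  rw [Metric.uniformEquicontinuous_iff]
  intro η hη
  set K := Metric.cthickening 1 (tsupport F)
  obtain ⟨δ, hδ, hUC⟩ := Metric.uniformContinuousOn_iff.1
    ((hsupp.cthickening.prod isCompact_Icc).uniformContinuousOn_of_continuous
      (s := K ×ˢ Icc 0 1) hF.continuousOn) η hη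
  refine ⟨min δ 1, by positivity, fun x x' hxx' y => ?_⟩
  have hfract : ∀ z, F z (Int.fract y) = F z y := fun z => by
    simpa using (hper z).sub_int_mul_eq (x := y) ⌊y⌋
  have hxx'1 : dist x x' ≤ 1 := hxx'.le.trans (min_le_right _ _)
  simp only [flip, ← hfract]
  by_cases hx : x ∈ K
  · by_cases hx' : x' ∈ K
    · refine hUC (x, Int.fract y) ⟨hx, Int.fract_nonneg y, (Int.fract_lt_one y).le⟩
        (x', Int.fract y) ⟨hx', Int.fract_nonneg y, (Int.fract_lt_one y).le⟩ ?_
      simpa [Prod.dist_eq] using hxx'.trans_le (min_le_left _ _)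
    · rw [apply_eq_zero_of_notMem_cthickening (x' := x') hx' (by simp),
        apply_eq_zero_of_notMem_cthickening hx' (by rwa [dist_comm])]
      simpa using hη
  · rw [apply_eq_zero_of_notMem_cthickening (x' := x) hx (by simp),
      apply_eq_zero_of_notMem_cthickening hx hxx'1]
    simpa using hη

lemma integrable_prod_restrict_Ioc_of_continuous {E : Type*} [NormedAddCommGroup E]
    {G : ℝ × ℝ → E} (hG : Continuous G) {K : Set ℝ} (hK : IsCompact K) {a b : ℝ}
    (hGK : ∀ x ∉ K, ∀ s ∈ Ioc a b, G (x, s) = 0) :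
    Integrable G (volume.prod (volume.restrict (Ioc a b))) := by
  rw [← Measure.restrict_univ (μ := volume), Measure.prod_restrict, Measure.restrict_univ]
  refine IntegrableOn.of_forall_sdiff_eq_zero
    (hG.continuousOn.integrableOn_compact (hK.prod (isCompact_Icc (a := a) (b := b))))
    (MeasurableSet.univ.prod measurableSet_Ioc) ?_
  rintro ⟨x, s⟩ ⟨⟨-, hs⟩, hxs⟩
  exact hGK x (fun hx => hxs ⟨hx, Ioc_subset_Icc_self hs⟩) s hs

lemma tendsto_integral_of_tendstoUniformly_of_forall_notMem_eq_zero {α ι : Type*}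
    [MeasurableSpace α] {μ : Measure α} {l : Filter ι} {D : ι → α → ℝ} {K : Set α}
    (hK : μ K < ⊤) (hDK : ∀ᶠ i in l, ∀ x ∉ K, D i x = 0) (hD : TendstoUniformly D 0 l) :
    Tendsto (fun i => ∫ x, D i x ∂μ) l (𝓝 0) := by
  rw [Metric.tendsto_nhds]
  intro η hη
  filter_upwards [Metric.tendstoUniformly_iff.1 hD (η / (μ.real K + 1)) (by positivity), hDK]
    with i hi hiK
  rw [dist_zero_right, ← setIntegral_eq_integral_of_forall_compl_eq_zero hiK]
  calc ‖∫ x in K, D i x ∂μ‖ ≤ η / (μ.real K + 1) * μ.real K :=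
        norm_setIntegral_le_of_norm_le_const hK fun x _ => by simpa using (hi x).le
    _ < η := by
        rw [div_mul_eq_mul_div, div_lt_iff₀ (by positivity)]
        nlinarith [measureReal_nonneg (μ := μ) (s := K)]

section Shift

variable {F : ℝ → ℝ → ℝ}

lemma integrable_shift (hF : Continuous (uncurry F)) (hsupp : HasCompactSupport F) {ε : ℝ}
    (hε : 0 ≤ ε) :
    Integrable (fun p : ℝ × ℝ => F (p.1 + ε * p.2) (p.1 / ε + p.2))
      (volume.prod (volume.restrict (Ioc 0 1))) :=
  integrable_prod_restrict_Ioc_of_continuous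
    (hF.comp (f := fun p : ℝ × ℝ => (p.1 + ε * p.2, p.1 / ε + p.2)) (by fun_prop))
    (hsupp.cthickening (r := ε)) fun _ hx _ hs =>
      congrFun (apply_eq_zero_of_notMem_cthickening hx
        (dist_self_add_mul_le hε (Ioc_subset_Icc_self hs))) _

lemma integral_intervalIntegral_shift (hF : Continuous (uncurry F))
    (hsupp : HasCompactSupport F) {ε : ℝ} (hε : 0 < ε) :
    ∫ x, ∫ s in (0 : ℝ)..1, F (x + ε * s) (x / ε + s) = ∫ x, F x (x / ε) := by
  have hshift : ∀ s, ∫ x, F (x + ε * s) (x / ε + s) = ∫ x, F x (x / ε) := fun s => by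
    rw [← integral_add_right_eq_self (fun x => F x (x / ε)) (ε * s)]
    congr 1 with x
    field_simp
  simp only [intervalIntegral.integral_of_le zero_le_one]
  rw [integral_integral_swap (integrable_shift hF hsupp hε.le)]
  simp [hshift]

lemma tendstoUniformly_intervalIntegral_shift_sub (hF : UniformEquicontinuous (flip F)) :
    TendstoUniformly
      (fun ε x => ∫ s in (0 : ℝ)..1, (F (x + ε * s) (x / ε + s) - F x (x / ε + s))) 0 (𝓝[>] 0) := by
  rw [Metric.tendstoUniformly_iff]
  intro η hη
  obtain ⟨δ, hδ, hFδ⟩ := Metric.uniformEquicontinuous_iff.1 hF (η / 2) (half_pos hη)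
  filter_upwards [Ioo_mem_nhdsGT hδ] with ε ⟨hε0, hεδ⟩ x
  rw [Pi.zero_apply, dist_zero_left]
  calc ‖∫ s in (0 : ℝ)..1, (F (x + ε * s) (x / ε + s) - F x (x / ε + s))‖
      ≤ η / 2 * |1 - 0| := by
        refine norm_integral_le_of_norm_le_const fun s hs => (hFδ _ _ ?_ _).le
        rw [uIoc_of_le zero_le_one] at hs
        rw [dist_comm]
        exact (dist_self_add_mul_le hε0.le (Ioc_subset_Icc_self hs)).trans_lt hεδ
    _ < η := by norm_num; linarith

theorem tendsto_integral_comp_div_of_periodic (hF : Continuous (uncurry F))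
    (hper : ∀ x, Periodic (F x) 1) (hsupp : HasCompactSupport F) :
    Tendsto (fun ε => ∫ x, F x (x / ε)) (𝓝[>] 0) (𝓝 (∫ x, ∫ y in (0 : ℝ)..1, F x y)) := by
  set D := fun ε x => ∫ s in (0 : ℝ)..1, (F (x + ε * s) (x / ε + s) - F x (x / ε + s))
  have hmean : Integrable fun x => ∫ y in (0 : ℝ)..1, F x y :=
    (continuous_parametric_intervalIntegral_of_continuous' hF 0 1).integrable_of_hasCompactSupport
      (hsupp.mono fun x hx h => hx (by simp [h]))
  have hD : ∀ ε > 0, (∫ x, F x (x / ε)) - ∫ x, ∫ y in (0 : ℝ)..1, F x y = ∫ x, D ε x := by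
    intro ε hε
    rw [← integral_intervalIntegral_shift hF hsupp hε, ← integral_sub _ hmean]
    · congr 1 with x
      have hshifted : Continuous fun s => F (x + ε * s) (x / ε + s) :=
        hF.comp (f := fun s => (x + ε * s, x / ε + s)) (by fun_prop)
      have hfiber : Continuous fun s => F x (x / ε + s) :=
        hF.comp (f := fun s => (x, x / ε + s)) (by fun_prop)
      simp only [D]
      rw [intervalIntegral.integral_sub (hshifted.intervalIntegrable _ _)
          (hfiber.intervalIntegrable _ _),
        intervalIntegral.integral_comp_add_left (F x), add_zero,
        (hper x).intervalIntegral_add_eq, zero_add]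
    · simpa only [intervalIntegral.integral_of_le zero_le_one]
        using (integrable_shift hF hsupp hε.le).integral_prod_left
  have hDK : ∀ᶠ ε in 𝓝[>] 0, ∀ x ∉ Metric.cthickening 1 (tsupport F), D ε x = 0 := by
    filter_upwards [Ioc_mem_nhdsGT one_pos] with ε hε x hx
    refine (intervalIntegral.integral_congr fun s hs => ?_).trans intervalIntegral.integral_zero
    rw [uIcc_of_le zero_le_one] at hs
    simp only [apply_eq_zero_of_notMem_cthickening hx
        ((dist_self_add_mul_le hε.1.le hs).trans hε.2),
      apply_eq_zero_of_notMem_cthickening (x' := x) hx (by simp), Pi.zero_apply, sub_self]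
  rw [← tendsto_sub_nhds_zero_iff]
  refine (tendsto_integral_of_tendstoUniformly_of_forall_notMem_eq_zero
    ((hsupp.cthickening (r := 1)).measure_lt_top (μ := volume)) hDK
    (tendstoUniformly_intervalIntegral_shift_sub
      (uniformEquicontinuous_flip_of_periodic hF hper hsupp))).congr' ?_
  filter_upwards [self_mem_nhdsWithin] with ε hε using (hD ε hε).symm

end Shift

theorem regOp_weak_convergence_general (v : ℝ → ℝ → ℝ)
    (hv : Continuous fun p : ℝ × ℝ => v p.1 p.2)
    (hper : ∀ x y : ℝ, v x (y + 1) = v x y)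
    (g : ℝ → ℝ) (hg : Continuous g) (hgsupp : HasCompactSupport g) :
    Tendsto (fun ε : ℝ => ∫ x : ℝ, g x * regOp ε v x) (𝓝[>] 0)
      (𝓝 (∫ x : ℝ, g x * ∫ y in (-(1:ℝ)/2)..(1/2), v x y)) := by
  have hcell : ∀ x, ∫ y in (-(1:ℝ)/2)..(1/2), v x y = ∫ y in (0 : ℝ)..1, v x y := fun x => by
    convert Periodic.intervalIntegral_add_eq (hper x) (-(1 : ℝ) / 2) 0 using 2 <;> norm_num
  simp only [hcell, ← intervalIntegral.integral_const_mul]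
  exact tendsto_integral_comp_div_of_periodic (F := fun x y => g x * v x y)
    ((hg.comp continuous_fst).mul hv) (fun x y => by simp [hper])
    (hgsupp.mono fun x hx hgx => hx (by ext; simp [hgx]))

/-- Weak convergence of regularized Y-periodic functions to their cell
average: `∫ g·B_ε v → ∫ g·(∫_Y v(·, y) dy)` as `ε → 0⁺`. -/
theorem regOp_weak_convergence (v : ℝ → ℝ → ℝ)
    (hv : Continuous fun p : ℝ × ℝ => v p.1 p.2)
    (hper : ∀ x y : ℝ, v x (y + 1) = v x y)
    (L : ℝ) (hLip : ∀ x x' y : ℝ, |v x y - v x' y| ≤ L * |x - x'|)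
    (g : ℝ → ℝ) (hg : Continuous g) (hgsupp : HasCompactSupport g) :
    Tendsto (fun ε : ℝ => ∫ x : ℝ, g x * regOp ε v x) (𝓝[>] 0)
      (𝓝 (∫ x : ℝ, g x * ∫ y in (-(1:ℝ)/2)..(1/2), v x y)) :=
  regOp_weak_convergence_general v hv hper g hg hgsupp
end
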